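/- For all real numbers β ≥ γ ≥ 0, the equation sinh(2t)·sinh(t) = sinh(β)·sinh(γ) has a unique solution t in the interval [0,∞); moreover, this solution satisfies t ≥ γ/2. -/

import Mathlib

/-!
The map `f t = sinh (2 t) * sinh t` is continuous and strictly increasing on `[0, ∞)`, so it takes
each value at most once there. Since `β ≥ γ ≥ 0`, the target value `sinh β * sinh γ` lies between
`f (γ / 2) = sinh γ * sinh (γ / 2)` and `f β = sinh (2 β) * sinh β`; the intermediate value theorem
gives a solution in `[γ / 2, β]`, and monotonicity forces every solution to be at least `γ / 2`.
-/

open Real Set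

lemma strictMonoOn_sinh_two_mul_mul_sinh :
    StrictMonoOn (fun t : ℝ => sinh (2 * t) * sinh t) (Ici 0) := by
  intro a ha b hb hab
  have hb0 : 0 < b := lt_of_le_of_lt ha hab
  exact mul_lt_mul' (sinh_le_sinh.mpr (by linarith)) (sinh_lt_sinh.mpr hab)
    (sinh_nonneg_iff.mpr ha) (sinh_pos_iff.mpr (by linarith))

theorem unique_t_solution (β γ : ℝ) (hβγ : γ ≤ β) (hγ : 0 ≤ γ) :
    (∃! t : ℝ, 0 ≤ t ∧ sinh (2 * t) * sinh t = sinh β * sinh γ) ∧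
    ∀ t : ℝ, 0 ≤ t → sinh (2 * t) * sinh t = sinh β * sinh γ →
        γ / 2 ≤ t := by
  set f : ℝ → ℝ := fun t => sinh (2 * t) * sinh t with hf
  have hmono : StrictMonoOn f (Ici 0) := strictMonoOn_sinh_two_mul_mul_sinh
  have hγ2 : γ / 2 ∈ Ici (0 : ℝ) := mem_Ici.mpr (by linarith)
  have hsinhγ : 0 ≤ sinh γ := sinh_nonneg_iff.mpr hγ
  have hsinhβ : 0 ≤ sinh β := sinh_nonneg_iff.mpr (hγ.trans hβγ)
  have hlow : f (γ / 2) ≤ sinh β * sinh γ := by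
    simp only [hf, mul_div_cancel₀ γ two_ne_zero, mul_comm (sinh γ)]
    exact mul_le_mul_of_nonneg_right (sinh_le_sinh.mpr (by linarith)) hsinhγ
  have hhigh : sinh β * sinh γ ≤ f β := by
    simp only [hf, mul_comm (sinh (2 * β))]
    exact mul_le_mul_of_nonneg_left (sinh_le_sinh.mpr (by linarith)) hsinhβ
  have hsol_ge : ∀ t : ℝ, 0 ≤ t → f t = sinh β * sinh γ → γ / 2 ≤ t := fun t ht hft =>
    (hmono.le_iff_le hγ2 (mem_Ici.mpr ht)).mp (hft ▸ hlow)
  obtain ⟨t, ht, hft⟩ := intermediate_value_Icc (by linarith) (by fun_prop) ⟨hlow, hhigh⟩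
  have ht0 : 0 ≤ t := le_trans hγ2 ht.1
  refine ⟨⟨t, ⟨ht0, hft⟩, fun s ⟨hs, hfs⟩ => ?_⟩, hsol_ge⟩
  exact hmono.injOn (mem_Ici.mpr hs) (mem_Ici.mpr ht0) (hfs.trans hft.symm)
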